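/- arXiv:1808.01156 — 3 statements merged into one kernel-verified Lean document; each statement's English description precedes it below -/
import Mathlib

section
/- Every d-dimensional copula C satisfies κ[C] ≤ κ[C_T], where C_T is the copula of the order transform of C and κ is multivariate Kendall's tau. -/
open MeasureTheory

/-- A copula measure: a probability measure on `[0,1]^d` (viewed inside
`Fin d → ℝ`) all of whose univariate marginals are uniform on `[0,1]`. -/
def IsCopulaMeasure {d : ℕ} (μ : Measure (Fin d → ℝ)) : Prop :=
  IsProbabilityMeasure μ ∧
    ∀ i : Fin d, μ.map (fun x => x i) = volume.restrict (Set.Icc 0 1)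

/-- The copula (distribution function) associated with a copula measure. -/
noncomputable def copulaFn {d : ℕ} (μ : Measure (Fin d → ℝ)) (u : Fin d → ℝ) : ℝ :=
  (μ {x | ∀ i, x i ≤ u i}).toReal

/-- The sorting (order statistic) map: `sortVec x` is the nondecreasing
rearrangement of the vector `x`. -/
noncomputable def sortVec {d : ℕ} (x : Fin d → ℝ) : Fin d → ℝ :=
  x ∘ Tuple.sort x

/-- The `i`-th univariate marginal distribution function of a measure on
`Fin d → ℝ`. -/
noncomputable def margCDF {d : ℕ} (ρ : Measure (Fin d → ℝ)) (i : Fin d) (t : ℝ) : ℝ :=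
  (ρ.map (fun x => x i) (Set.Iic t)).toReal

/-- `ν` is the copula measure of the order transform `C_T` of the copula
with copula measure `μ`: Sklar's identity `H^C_T = C_T ∘ (marginals of H^C_T)`
holds, where `H^C_T` is the distribution function of the image of `μ` under
the sorting map. -/
def IsOrderTransform {d : ℕ} (μ ν : Measure (Fin d → ℝ)) : Prop :=
  IsCopulaMeasure ν ∧
    ∀ x : Fin d → ℝ,
      ((μ.map sortVec) {y | ∀ i, y i ≤ x i}).toReal
        = copulaFn ν (fun i => margCDF (μ.map sortVec) i (x i))


/-! Sorting is monotone for the componentwise order, so `C(u) = Q^C(x ≤ u)` is at most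
`Q^C(sort x ≤ sort u) = H^C_T(sort u) = C_T(F(sort u))`, where `F` collects the marginal
distribution functions of the sorted vector. These marginals are continuous, so `F` pushes the
law of the sorted vector forward to the copula measure of `C_T` (uniqueness in Sklar's theorem),
and `u ↦ F(sort u)` carries `Q^C` to `Q^{C_T}`. Integrating the pointwise bound against `Q^C`
therefore gives `[C,C] ≤ [C_T,C_T]`, and `κ` is an increasing affine function of `[C,C]`. -/

open Set Filter Topology ProbabilityTheory
open scoped Finset

section Sorting

variable {d : ℕ}

lemma Monotone.apply_le_iff_lt_card_filter {g : Fin d → ℝ} (hg : Monotone g) (i : Fin d)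
    (t : ℝ) : g i ≤ t ↔ (i : ℕ) < #{j | g j ≤ t} := by
  constructor
  · intro h
    calc (i : ℕ) < #(Finset.Iic i) := by simp
      _ ≤ #{j | g j ≤ t} := Finset.card_le_card fun j hj => by
        simpa using (hg (Finset.mem_Iic.1 hj)).trans h
  · intro h
    by_contra! hi
    have : #{j | g j ≤ t} ≤ #(Finset.Iio i) := Finset.card_le_card fun j hj => by
      simp only [Finset.mem_filter, Finset.mem_univ, true_and] at hj
      exact Finset.mem_Iio.2 (lt_of_not_ge fun hij => (hi.trans_le (hg hij)).not_ge hj)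
    rw [Fin.card_Iio] at this
    omega

lemma card_filter_sortVec_le (x : Fin d → ℝ) (t : ℝ) :
    #{j | sortVec x j ≤ t} = #{j | x j ≤ t} := by
  rw [Finset.card_filter, Finset.card_filter]
  exact Equiv.sum_comp (Tuple.sort x) fun j => if x j ≤ t then 1 else 0

lemma sortVec_apply_le_iff (x : Fin d → ℝ) (i : Fin d) (t : ℝ) :
    sortVec x i ≤ t ↔ (i : ℕ) < #{j | x j ≤ t} := by
  rw [← card_filter_sortVec_le]
  exact (Tuple.monotone_sort x).apply_le_iff_lt_card_filter i t

lemma monotone_sortVec : Monotone (sortVec (d := d)) := by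
  intro x u hxu i
  rw [sortVec_apply_le_iff]
  refine ((sortVec_apply_le_iff u i _).1 le_rfl).trans_le (Finset.card_le_card fun j hj => ?_)
  simp only [Finset.mem_filter, Finset.mem_univ, true_and] at hj ⊢
  exact (hxu j).trans hj

lemma measurable_sortVec : Measurable (sortVec (d := d)) := by
  refine measurable_pi_lambda _ fun i => measurable_of_Iic fun t => ?_
  have hcount : Measurable fun x : Fin d → ℝ => #{j | x j ≤ t} := by
    simp_rw [Finset.card_filter]
    exact Finset.measurable_sum _ fun j _ =>
      Measurable.ite (measurableSet_le (measurable_pi_apply j) measurable_const)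
        measurable_const measurable_const
  have hpre : (fun x => sortVec x i) ⁻¹' Iic t = {x | (i : ℕ) < #{j | x j ≤ t}} :=
    Set.ext fun x => sortVec_apply_le_iff x i t
  rw [hpre]
  exact measurableSet_lt measurable_const hcount

end Sorting

lemma Monotone.exists_eq_and_setOf_le_eq_Iic {F : ℝ → ℝ} (hmono : Monotone F)
    (hcont : Continuous F) {c : ℝ} (hne : ∃ t, F t ≤ c) (hbdd : BddAbove {t | F t ≤ c}) :
    ∃ T, F T = c ∧ {t | F t ≤ c} = Iic T := by
  set T := sSup {t | F t ≤ c}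
  have hT : F T ≤ c := (isClosed_le hcont continuous_const).csSup_mem hne hbdd
  refine ⟨T, le_antisymm hT ?_, Set.ext fun t => ⟨fun ht => le_csSup hbdd ht,
    fun ht => (hmono ht).trans hT⟩⟩
  by_contra! hlt
  obtain ⟨s, hTs, hs⟩ :=
    ((frequently_gt_nhds T).and_eventually (hcont.tendsto T |>.eventually (gt_mem_nhds hlt))).exists
  exact hTs.not_ge (le_csSup hbdd hs.le)

namespace ProbabilityTheory

variable (m : Measure ℝ) [IsProbabilityMeasure m]

lemma continuous_cdf [NullSingletonClass m] : Continuous (cdf m) := by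
  refine continuous_iff_continuousAt.2 fun x => ?_
  rw [(monotone_cdf m).continuousAt_iff_leftLim_eq_rightLim, StieltjesFunction.rightLim_eq]
  have hjump := (cdf m).measure_singleton x
  rw [measure_cdf, measure_singleton, eq_comm, ENNReal.ofReal_eq_zero] at hjump
  exact le_antisymm ((monotone_cdf m).leftLim_le le_rfl) (by linarith)

lemma exists_cdf_eq_and_setOf_le_eq_Iic [NullSingletonClass m] {c : ℝ} (hc : c < 1)
    (hne : ∃ t, cdf m t ≤ c) : ∃ T, cdf m T = c ∧ {t | cdf m t ≤ c} = Iic T := by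
  refine (monotone_cdf m).exists_eq_and_setOf_le_eq_Iic (continuous_cdf m) hne ?_
  obtain ⟨N, hN⟩ := ((tendsto_cdf_atTop m).eventually (lt_mem_nhds hc)).exists_forall_of_atTop
  exact ⟨N, fun t ht => le_of_not_gt fun hNt => (hN t hNt.le).not_ge ht⟩

end ProbabilityTheory

section DistributionFunction

variable {d : ℕ}

lemma copulaFn_eq_measureReal (ν : Measure (Fin d → ℝ)) (u : Fin d → ℝ) :
    copulaFn ν u = ν.real (Iic u) := rfl

lemma copulaFn_sub_copulaFn_le (ν : Measure (Fin d → ℝ)) [IsFiniteMeasure ν]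
    (u w : Fin d → ℝ) :
    copulaFn ν u - copulaFn ν w ≤ ∑ i, ν.real ((fun v => v i) ⁻¹' Ioc (w i) (u i)) := by
  have hcover : Iic u ⊆ Iic w ∪ ⋃ i, (fun v => v i) ⁻¹' Ioc (w i) (u i) := fun v hv => by
    by_cases hvw : v ≤ w
    · exact Or.inl hvw
    · obtain ⟨i, hi⟩ := not_forall.1 hvw
      exact Or.inr (mem_iUnion.2 ⟨i, lt_of_not_ge hi, hv i⟩)
  have := (measureReal_mono hcover (measure_ne_top ν _)).trans ((measureReal_union_le _ _).trans
    (add_le_add_right (measureReal_iUnion_fintype_le _) _))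
  rw [copulaFn_eq_measureReal, copulaFn_eq_measureReal]
  linarith

end DistributionFunction

namespace IsCopulaMeasure

variable {d : ℕ} {ν : Measure (Fin d → ℝ)}

lemma measure_preimage_eval (hν : IsCopulaMeasure ν) (i : Fin d) {s : Set ℝ}
    (hs : MeasurableSet s) : ν ((fun v => v i) ⁻¹' s) = volume (s ∩ Icc 0 1) := by
  rw [← Measure.map_apply (measurable_pi_apply i) hs, hν.2 i, Measure.restrict_apply hs]

lemma measureReal_preimage_eval_Ioc_le (hν : IsCopulaMeasure ν) (i : Fin d) (p q : ℝ) :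
    ν.real ((fun v => v i) ⁻¹' Ioc p q) ≤ |q - p| := by
  rw [measureReal_def, hν.measure_preimage_eval i measurableSet_Ioc]
  calc (volume (Ioc p q ∩ Icc 0 1)).toReal ≤ volume.real (Ioc p q) :=
        measureReal_mono inter_subset_left measure_Ioc_lt_top.ne
    _ = max (q - p) 0 := Real.volume_real_Ioc
    _ ≤ |q - p| := max_le (le_abs_self _) (abs_nonneg _)

lemma lipschitzWith_copulaFn (hν : IsCopulaMeasure ν) : LipschitzWith d (copulaFn ν) := by
  have := hν.1
  have hbound : ∀ u w, copulaFn ν u - copulaFn ν w ≤ d * dist u w := fun u w =>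
    calc copulaFn ν u - copulaFn ν w ≤ ∑ i, ν.real ((fun v => v i) ⁻¹' Ioc (w i) (u i)) :=
          copulaFn_sub_copulaFn_le ν u w
      _ ≤ ∑ _i : Fin d, dist u w := Finset.sum_le_sum fun i _ =>
          (hν.measureReal_preimage_eval_Ioc_le i _ _).trans
            ((Real.dist_eq (u i) (w i)).symm.le.trans (dist_le_pi_dist u w i))
      _ = d * dist u w := by simp
  refine LipschitzWith.of_dist_le_mul fun u w => ?_
  rw [Real.dist_eq, abs_sub_le_iff, NNReal.coe_natCast]
  exact ⟨hbound u w, dist_comm u w ▸ hbound w u⟩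

lemma continuous_copulaFn (hν : IsCopulaMeasure ν) : Continuous (copulaFn ν) :=
  hν.lipschitzWith_copulaFn.continuous

lemma integrable_copulaFn (hν : IsCopulaMeasure ν) (κ : Measure (Fin d → ℝ))
    [IsFiniteMeasure κ] : Integrable (copulaFn ν) κ := by
  have := hν.1
  refine Integrable.of_bound hν.continuous_copulaFn.aestronglyMeasurable 1 (ae_of_all _ fun u => ?_)
  rw [copulaFn_eq_measureReal, Real.norm_of_nonneg measureReal_nonneg]
  exact measureReal_le_one

lemma copulaFn_min_one (hν : IsCopulaMeasure ν) (u : Fin d → ℝ) :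
    copulaFn ν (fun i => min (u i) 1) = copulaFn ν u := by
  have := hν.1
  have hnull : ∀ i, ν.real ((fun v => v i) ⁻¹' Ioc (min (u i) 1) (u i)) = 0 := fun i => by
    have hempty : Ioc (min (u i) 1) (u i) ∩ Icc 0 1 = ∅ :=
      eq_empty_of_forall_notMem fun x ⟨⟨hlt, hle⟩, _, hle1⟩ =>
        (min_lt_iff.1 hlt).elim hle.not_gt hle1.not_gt
    rw [measureReal_def, hν.measure_preimage_eval i measurableSet_Ioc, hempty, measure_empty,
      ENNReal.toReal_zero]
  refine le_antisymm (measureReal_mono fun v hv i => (hv i).trans (min_le_left _ _)) ?_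
  have := copulaFn_sub_copulaFn_le ν u fun i => min (u i) 1
  simp only [hnull, Finset.sum_const_zero] at this
  linarith

lemma measure_Iic_eq_zero (hν : IsCopulaMeasure ν) {u : Fin d → ℝ} {i : Fin d}
    (hu : u i ≤ 0) : ν (Iic u) = 0 := by
  have hsub : Iic u ⊆ (fun v => v i) ⁻¹' Iic 0 := fun v hv => (hv i).trans hu
  refine measure_mono_null hsub ?_
  rw [hν.measure_preimage_eval i measurableSet_Iic]
  exact measure_mono_null (fun x hx => le_antisymm hx.1 hx.2.1) (Real.volume_singleton (a := 0))

lemma nullSingletonClass_map_eval (hν : IsCopulaMeasure ν) (i : Fin d) :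
    NullSingletonClass (ν.map (fun v => v i)) := by
  rw [hν.2 i]
  infer_instance

end IsCopulaMeasure

lemma MeasureTheory.Measure.ext_of_Iic_pi {ι : Type*} [Fintype ι] {μ ν : Measure (ι → ℝ)}
    [IsFiniteMeasure μ] (h : ∀ a, μ (Iic a) = ν (Iic a)) : μ = ν := by
  have hspan : IsCountablySpanning (range (Iic : ℝ → Set ℝ)) :=
    ⟨fun n : ℕ => Iic (n : ℝ), fun _ => mem_range_self _,
      iUnion_Iic_of_not_bddAbove_range fun ⟨b, hb⟩ =>
        (exists_nat_gt b).elim fun n hn => hn.not_ge (hb (mem_range_self n))⟩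
  refine ext_of_generateFrom_of_iUnion _ (fun n : ℕ => Iic fun _ => (n : ℝ))
    (generateFrom_eq_pi (fun _ => (borel_eq_generateFrom_Iic ℝ).symm.trans
      BorelSpace.measurable_eq.symm) fun _ => hspan).symm
    (IsPiSystem.pi fun _ => isPiSystem_Iic) ?_ ?_ (fun _ => measure_ne_top μ _) ?_
  · refine eq_univ_of_forall fun x => mem_iUnion.2 ?_
    obtain ⟨b, hb⟩ := Finite.bddAbove_range x
    obtain ⟨n, hn⟩ := exists_nat_ge b
    exact ⟨n, fun i => (hb (mem_range_self i)).trans hn⟩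
  · exact fun n => ⟨fun _ => Iic (n : ℝ), fun _ _ => mem_range_self _, pi_univ_Iic _⟩
  · rintro _ ⟨t, ht, rfl⟩
    choose a ha using fun i => ht i (mem_univ i)
    obtain rfl : t = fun i => Iic (a i) := funext fun i => (ha i).symm
    rw [pi_univ_Iic]
    exact h a

lemma tendsto_measureReal_Iic_ite_atTop {ι : Type*} [Finite ι] (ρ : Measure (ι → ℝ))
    [IsFiniteMeasure ρ] (p : ι → Prop) [DecidablePred p] (T : ι → ℝ) :
    Tendsto (fun s => ρ.real (Iic fun i => if p i then T i else s)) atTop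
      (𝓝 (ρ.real {x | ∀ i, p i → x i ≤ T i})) := by
  have hmono : Monotone fun s => Iic fun i => if p i then T i else s :=
    fun s s' hss' x hx i => (hx i).trans (by dsimp only; split_ifs <;> simp [hss'])
  have hunion : ⋃ s, Iic (fun i => if p i then T i else s) = {x | ∀ i, p i → x i ≤ T i} := by
    refine Set.ext fun x => ⟨fun hx i hi => ?_, fun hx => ?_⟩
    · obtain ⟨s, hs⟩ := mem_iUnion.1 hx
      simpa [hi] using hs i
    · obtain ⟨b, hb⟩ := Finite.bddAbove_range x
      refine mem_iUnion.2 ⟨b, fun i => ?_⟩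
      by_cases hi : p i
      · simpa [hi] using hx i hi
      · simpa [hi] using hb (mem_range_self i)
  rw [← hunion]
  exact (ENNReal.tendsto_toReal (measure_ne_top _ _)).comp (tendsto_measure_iUnion_atTop hmono)

section OrderTransform

variable {d : ℕ}

noncomputable def margCDFVec (ρ : Measure (Fin d → ℝ)) (x : Fin d → ℝ) : Fin d → ℝ :=
  fun i => margCDF ρ i (x i)

variable {ρ ν : Measure (Fin d → ℝ)} [IsProbabilityMeasure ρ]

instance isProbabilityMeasure_map_eval (i : Fin d) : IsProbabilityMeasure (ρ.map fun x => x i) :=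
  Measure.isProbabilityMeasure_map (measurable_pi_apply i).aemeasurable

lemma margCDF_eq_cdf (i : Fin d) : margCDF ρ i = cdf (ρ.map fun x => x i) := by
  ext t
  rw [cdf_eq_real]
  rfl

lemma measurable_margCDFVec : Measurable (margCDFVec ρ) :=
  measurable_pi_lambda _ fun i => by
    change Measurable (margCDF ρ i ∘ fun x : Fin d → ℝ => x i)
    rw [margCDF_eq_cdf]
    exact (monotone_cdf _).measurable.comp (measurable_pi_apply i)

lemma measure_margCDFVec_preimage_Iic (hρ : ∀ i, NullSingletonClass (ρ.map fun x => x i))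
    (hν : IsCopulaMeasure ν) (hsk : ∀ x, ρ.real (Iic x) = copulaFn ν (margCDFVec ρ x))
    (a : Fin d → ℝ) : ρ (margCDFVec ρ ⁻¹' Iic a) = ν (Iic a) := by
  have := hν.1
  -- each level set `{t | F_i t ≤ a i}` is empty, or `Iic T_i` with `F_i T_i = a i`, or `univ`
  by_cases hempty : ∃ i, ∀ t, a i < margCDF ρ i t
  · obtain ⟨i, hi⟩ := hempty
    have hai : a i ≤ 0 := by
      rw [margCDF_eq_cdf] at hi
      exact ge_of_tendsto' (tendsto_cdf_atBot _) fun t => (hi t).le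
    have : margCDFVec ρ ⁻¹' Iic a = ∅ :=
      eq_empty_of_forall_notMem fun x hx => (hi (x i)).not_ge (hx i)
    rw [this, measure_empty, hν.measure_Iic_eq_zero hai]
  push Not at hempty
  have hlevel : ∀ i, ∃ T, a i < 1 → margCDF ρ i T = a i ∧ {t | margCDF ρ i t ≤ a i} = Iic T := by
    intro i
    by_cases hai : a i < 1
    · have := hρ i
      simp only [margCDF_eq_cdf] at hempty ⊢
      obtain ⟨T, hT⟩ := exists_cdf_eq_and_setOf_le_eq_Iic _ hai (hempty i)
      exact ⟨T, fun _ => hT⟩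
    · exact ⟨0, fun h => absurd h hai⟩
  choose T hT using hlevel
  have hpre : margCDFVec ρ ⁻¹' Iic a = {x | ∀ i, a i < 1 → x i ≤ T i} := by
    refine Set.ext fun x => forall_congr' fun i => ?_
    by_cases hai : a i < 1
    · simpa [margCDFVec, hai] using Set.ext_iff.1 (hT i hai).2 (x i)
    · have : margCDF ρ i (x i) ≤ 1 := by
        rw [margCDF_eq_cdf]
        exact cdf_le_one _ _
      simpa [margCDFVec, hai] using this.trans (not_lt.1 hai)
  -- the unconstrained coordinates (`1 ≤ a i`) are sent to `+∞` along `s`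
  have hlim_ρ := tendsto_measureReal_Iic_ite_atTop ρ (fun i => a i < 1) T
  have hlim_box : Tendsto (fun s => margCDFVec ρ fun i => if a i < 1 then T i else s) atTop
      (𝓝 fun i => min (a i) 1) := by
    refine tendsto_pi_nhds.2 fun i => ?_
    by_cases hai : a i < 1
    · simp [margCDFVec, hai, (hT i hai).1, hai.le]
    · simpa [margCDFVec, hai, not_lt.1 hai, margCDF_eq_cdf] using tendsto_cdf_atTop _
  have hlim_ν : Tendsto (fun s => ρ.real (Iic fun i => if a i < 1 then T i else s)) atTop
      (𝓝 (ν.real (Iic a))) := by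
    simp_rw [hsk, ← copulaFn_eq_measureReal, ← hν.copulaFn_min_one a]
    exact (hν.continuous_copulaFn.tendsto _).comp hlim_box
  rw [hpre]
  exact (ENNReal.toReal_eq_toReal_iff' (measure_ne_top _ _) (measure_ne_top _ _)).1
    (tendsto_nhds_unique hlim_ρ hlim_ν)

/-- Uniqueness in Sklar's theorem, for continuous marginals. -/
lemma map_margCDFVec_eq (hρ : ∀ i, NullSingletonClass (ρ.map fun x => x i))
    (hν : IsCopulaMeasure ν) (hsk : ∀ x, ρ.real (Iic x) = copulaFn ν (margCDFVec ρ x)) :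
    ρ.map (margCDFVec ρ) = ν :=
  Measure.ext_of_Iic_pi fun a => by
    rw [Measure.map_apply measurable_margCDFVec measurableSet_Iic]
    exact measure_margCDFVec_preimage_Iic hρ hν hsk a

end OrderTransform

lemma nullSingletonClass_map_eval_sortVec {d : ℕ} {μ : Measure (Fin d → ℝ)}
    (hμ : ∀ i, NullSingletonClass (μ.map fun x => x i)) (i : Fin d) :
    NullSingletonClass ((μ.map sortVec).map fun y => y i) := by
  refine ⟨fun t => ?_⟩
  rw [Measure.map_map (measurable_pi_apply i) measurable_sortVec,
    Measure.map_apply ((measurable_pi_apply i).comp measurable_sortVec) (measurableSet_singleton t)]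
  refine measure_mono_null (t := ⋃ j, (fun x => x j) ⁻¹' {t})
    (fun x hx => mem_iUnion.2 ⟨Tuple.sort x i, hx⟩) (measure_iUnion_null fun j => ?_)
  rw [← Measure.map_apply (measurable_pi_apply j) (measurableSet_singleton t)]
  exact measure_singleton t

namespace IsOrderTransform

variable {d : ℕ} {μ ν : Measure (Fin d → ℝ)}

lemma copulaFn_le_copulaFn_margCDFVec_sortVec [IsFiniteMeasure μ] (hν : IsOrderTransform μ ν)
    (u : Fin d → ℝ) :
    copulaFn μ u ≤ copulaFn ν (margCDFVec (μ.map sortVec) (sortVec u)) := by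
  have hsub : Iic u ⊆ sortVec ⁻¹' Iic (sortVec u) := fun x hx => monotone_sortVec hx
  calc copulaFn μ u ≤ μ.real (sortVec ⁻¹' Iic (sortVec u)) := measureReal_mono hsub
    _ = copulaFn ν (margCDFVec (μ.map sortVec) (sortVec u)) := by
      rw [measureReal_def, ← Measure.map_apply measurable_sortVec measurableSet_Iic]
      exact hν.2 (sortVec u)

lemma integral_copulaFn_le (hμ : IsCopulaMeasure μ) (hν : IsOrderTransform μ ν) :
    ∫ u, copulaFn μ u ∂μ ≤ ∫ v, copulaFn ν v ∂ν := by
  have := hμ.1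
  set ρ := μ.map sortVec
  have := Measure.isProbabilityMeasure_map (μ := μ) measurable_sortVec.aemeasurable
  have hmeas : Measurable (margCDFVec ρ ∘ sortVec) := measurable_margCDFVec.comp measurable_sortVec
  have hmap : μ.map (margCDFVec ρ ∘ sortVec) = ν := by
    rw [← Measure.map_map measurable_margCDFVec measurable_sortVec]
    exact map_margCDFVec_eq
      (nullSingletonClass_map_eval_sortVec hμ.nullSingletonClass_map_eval) hν.1 hν.2
  have hintegrable : Integrable (copulaFn ν ∘ margCDFVec ρ ∘ sortVec) μ :=
    (hν.1.integrable_copulaFn _).comp_measurable hmeas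
  calc ∫ u, copulaFn μ u ∂μ ≤ ∫ u, copulaFn ν (margCDFVec ρ (sortVec u)) ∂μ :=
        integral_mono (hμ.integrable_copulaFn μ) hintegrable
          hν.copulaFn_le_copulaFn_margCDFVec_sortVec
    _ = ∫ v, copulaFn ν v ∂(μ.map (margCDFVec ρ ∘ sortVec)) :=
      (integral_map hmeas.aemeasurable hν.1.continuous_copulaFn.aestronglyMeasurable).symm
    _ = ∫ v, copulaFn ν v ∂ν := by rw [hmap]

end IsOrderTransform

theorem stmt14_general (d : ℕ) (μ ν : Measure (Fin d → ℝ))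
    (hμ : IsCopulaMeasure μ) (hν : IsOrderTransform μ ν) :
    (2 ^ d * ∫ u, copulaFn μ u ∂μ - 1) / (2 ^ (d - 1) - 1)
      ≤ (2 ^ d * ∫ u, copulaFn ν u ∂ν - 1) / (2 ^ (d - 1) - 1) := by
  have hden : 0 ≤ (2 : ℝ) ^ (d - 1) - 1 := sub_nonneg.2 (one_le_pow₀ one_le_two)
  gcongr
  exact hν.integral_copulaFn_le hμ

theorem stmt14 (d : ℕ) (hd : 2 ≤ d) (μ ν : Measure (Fin d → ℝ))
    (hμ : IsCopulaMeasure μ) (hν : IsOrderTransform μ ν) :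
    (2 ^ d * ∫ u, copulaFn μ u ∂μ - 1) / (2 ^ (d - 1) - 1)
      ≤ (2 ^ d * ∫ u, copulaFn ν u ∂ν - 1) / (2 ^ (d - 1) - 1) :=
  stmt14_general d μ ν hμ hν
end

section
/- With the notation of i.i.d. uniform samples, for every k ∈ {2,...,d} the identity 1/(d+1) + (1/(2d)) ∑_{l=1}^{d-k} C(d,l-1) C(d,l)/C(2d-1,2l-1) = 1/2 − (1/4) ∑_{h=2}^k (1/(2h-1)) C(2h,h) C(2d+2-2h, d+1-h) / C(2d, d) holds. -/
/-!
Lowering `k` by one removes the summand `l = d - k` on the left and the summand `h = k + 1` on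
the right, and these two agree after weighting by `1 / (2d)` and `1 / 4` respectively (a factorial
computation). So both sides differ by the same amount for every `k`, and it suffices to treat
`k = d`, where the left side is `1 / (d + 1)`. There `C(2h, h) / (2h - 1) = 2 Cat(h - 1)`, so the
right side is a truncated convolution of Catalan numbers with central binomial coefficients.
The full convolution `∑ Cat(i) C(2j, j)` over `i + j = n` is `C(2n + 2, n + 1) / 2`: symmetrise
using `C(2j, j) = (j + 1) Cat(j)` and apply the Catalan recurrence.
-/

open Finset

namespace Nat

theorem centralBinom_succ_eq_two_mul_catalan (n : ℕ) :
    centralBinom (n + 1) = 2 * (2 * n + 1) * catalan n := by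
  refine Nat.eq_of_mul_eq_mul_left (by positivity : 0 < n + 1) ?_
  rw [succ_mul_centralBinom_succ, ← succ_mul_catalan_eq_centralBinom]
  ring

theorem two_mul_sum_antidiagonal_catalan_mul_centralBinom (n : ℕ) :
    2 * ∑ p ∈ antidiagonal n, catalan p.1 * centralBinom p.2 = centralBinom (n + 1) :=
  calc 2 * ∑ p ∈ antidiagonal n, catalan p.1 * centralBinom p.2
      = ∑ p ∈ antidiagonal n,
          (catalan p.2 * centralBinom p.1 + catalan p.1 * centralBinom p.2) := by
        rw [two_mul, sum_add_distrib]
        nth_rw 1 [← Finset.Nat.sum_antidiagonal_swap]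
        rfl
    _ = ∑ p ∈ antidiagonal n, (n + 2) * (catalan p.1 * catalan p.2) := by
        refine sum_congr rfl fun p hp => ?_
        rw [HasAntidiagonal.mem_antidiagonal] at hp
        rw [← succ_mul_catalan_eq_centralBinom, ← succ_mul_catalan_eq_centralBinom, ← hp]
        ring
    _ = (n + 2) * catalan (n + 1) := by rw [← mul_sum, catalan_succ']
    _ = centralBinom (n + 1) := succ_mul_catalan_eq_centralBinom _

end Nat

def lhsSummand (d l : ℕ) : ℚ :=
  (d.choose (l - 1) : ℚ) * (d.choose l : ℚ) / ((2 * d - 1).choose (2 * l - 1) : ℚ)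

def rhsSummand (d h : ℕ) : ℚ :=
  (1 / (2 * (h : ℚ) - 1)) * ((2 * h).choose h : ℚ) *
    ((2 * d + 2 - 2 * h).choose (d + 1 - h) : ℚ) / ((2 * d).choose d : ℚ)

theorem rhsSummand_succ (d j : ℕ) :
    rhsSummand d (j + 1) = 2 * catalan j * (d - j).centralBinom / d.centralBinom := by
  have hd : 2 * d + 2 - 2 * (j + 1) = 2 * (d - j) := by omega
  rw [rhsSummand, hd, Nat.add_sub_add_right, ← Nat.centralBinom_eq_two_mul_choose,
    ← Nat.centralBinom_eq_two_mul_choose, ← Nat.centralBinom_eq_two_mul_choose,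
    Nat.centralBinom_succ_eq_two_mul_catalan]
  rw [show 2 * ((j + 1 : ℕ) : ℚ) - 1 = 2 * j + 1 by push_cast; ring]
  push_cast
  field_simp

theorem one_div_succ_eq_sum_rhsSummand (d : ℕ) (hd : 1 ≤ d) :
    (1 : ℚ) / (d + 1) = 1 / 2 - 1 / 4 * ∑ h ∈ Icc 2 d, rhsSummand d h := by
  obtain ⟨m, rfl⟩ : ∃ m, d = m + 1 := ⟨d - 1, by omega⟩
  set S := ∑ i ∈ range m, catalan (i + 1) * (m - i).centralBinom
  have hsum : ∑ h ∈ Icc 2 (m + 1), rhsSummand (m + 1) h = 2 * S / (m + 1).centralBinom := by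
    rw [← Ico_add_one_right_eq_Icc, sum_Ico_eq_sum_range, show m + 1 + 1 - 2 = m by omega]
    push_cast [S, mul_sum, sum_div]
    refine sum_congr rfl fun i _ => ?_
    rw [show 2 + i = i + 1 + 1 by ring, rhsSummand_succ, Nat.add_sub_add_right]
    ring
  have hconv : 2 * ((m + 1).centralBinom + S + catalan (m + 1)) = (m + 1 + 1).centralBinom := by
    rw [← Nat.two_mul_sum_antidiagonal_catalan_mul_centralBinom (m + 1),
      Nat.sum_antidiagonal_eq_sum_range_succ (fun i j => catalan i * j.centralBinom),
      sum_range_succ, sum_range_succ']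
    simp only [S, catalan_zero, Nat.centralBinom_zero, Nat.sub_zero, Nat.sub_self,
      Nat.add_sub_add_right, one_mul, mul_one]
    ring
  have hcat : ((m + 1 + 1) * catalan (m + 1) : ℚ) = (m + 1).centralBinom := by
    exact_mod_cast succ_mul_catalan_eq_centralBinom (m + 1)
  have hcb : ((m + 1 + 1) * (m + 1 + 1).centralBinom : ℚ)
      = 2 * (2 * (m + 1) + 1) * (m + 1).centralBinom := by
    exact_mod_cast Nat.succ_mul_centralBinom_succ (m + 1)
  have hconvQ : (2 * ((m + 1).centralBinom + S + catalan (m + 1)) : ℚ)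
      = (m + 1 + 1).centralBinom := by
    exact_mod_cast hconv
  have hpos : ((m + 1).centralBinom : ℚ) ≠ 0 := mod_cast (m + 1).centralBinom_ne_zero
  rw [hsum]
  push_cast
  field_simp
  linear_combination 2 * ((m : ℚ) + 2) * hconvQ + 2 * hcb - 4 * hcat

theorem lhsSummand_div_eq_rhsSummand_div {a b d : ℕ} (hd : a + b + 1 = d) :
    lhsSummand d (b + 1) / (2 * d) = rhsSummand d (a + 1) / 4 := by
  subst hd
  have c1 : (a + b + 1).choose (b + 1 - 1) = (b + (a + 1)).choose b := by congr 1; omega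
  have c2 : (a + b + 1).choose (b + 1) = (b + 1 + a).choose (b + 1) := by congr 1; omega
  have c3 : (2 * (a + b + 1) - 1).choose (2 * (b + 1) - 1)
      = (2 * b + 1 + 2 * a).choose (2 * b + 1) := by
    congr 1; omega
  have c4 : (2 * (a + 1)).choose (a + 1) = (a + 1 + (a + 1)).choose (a + 1) := by congr 1; omega
  have c5 : (2 * (a + b + 1) + 2 - 2 * (a + 1)).choose (a + b + 1 + 1 - (a + 1)) =
      (b + 1 + (b + 1)).choose (b + 1) := by congr 1 <;> omega
  have c6 : (2 * (a + b + 1)).choose (a + b + 1)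
      = (a + b + 1 + (a + b + 1)).choose (a + b + 1) := by
    congr 1; omega
  simp only [lhsSummand, rhsSummand, c1, c2, c3, c4, c5, c6, Nat.cast_add_choose]
  have e1 : b + (a + 1) = a + b + 1 := by ring
  have e2 : b + 1 + a = a + b + 1 := by ring
  have e3 : a + 1 + (a + 1) = 2 * a + 1 + 1 := by ring
  have e4 : b + 1 + (b + 1) = 2 * b + 1 + 1 := by ring
  have e5 : a + b + 1 + (a + b + 1) = 2 * b + 1 + 2 * a + 1 := by ring
  simp only [e1, e2, e3, e4, e5, Nat.factorial_succ]
  push_cast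
  rw [show 2 * ((a : ℚ) + 1) - 1 = 2 * a + 1 by ring]
  field_simp
  ring

theorem one_div_succ_add_sum_lhsSummand (k n : ℕ) (hk : 1 ≤ k) :
    (1 : ℚ) / ((k + n : ℕ) + 1)
        + 1 / (2 * (k + n : ℕ)) * ∑ l ∈ Icc 1 n, lhsSummand (k + n) l
      = 1 / 2 - 1 / 4 * ∑ h ∈ Icc 2 k, rhsSummand (k + n) h := by
  induction n generalizing k with
  | zero => simpa using one_div_succ_eq_sum_rhsSummand k hk
  | succ n ih =>
    have ih' := ih (k + 1) (by omega)
    rw [show k + 1 + n = k + (n + 1) by ring, sum_Icc_succ_top (by omega)] at ih'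
    rw [sum_Icc_succ_top (by omega)]
    have step := lhsSummand_div_eq_rhsSummand_div (show k + n + 1 = k + (n + 1) by ring)
    linear_combination ih' + step

theorem stmt17 (d k : ℕ) (hk : 2 ≤ k) (hkd : k ≤ d) :
    (1 : ℚ) / (d + 1) + (1 / (2 * d)) *
        ∑ l ∈ Finset.Icc 1 (d - k),
          (Nat.choose d (l - 1) : ℚ) * (Nat.choose d l : ℚ) /
            (Nat.choose (2 * d - 1) (2 * l - 1) : ℚ)
      = 1 / 2 - (1 / 4) *
        ∑ h ∈ Finset.Icc 2 k,
          (1 / (2 * (h : ℚ) - 1)) * (Nat.choose (2 * h) h : ℚ) *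
            (Nat.choose (2 * d + 2 - 2 * h) (d + 1 - h) : ℚ) /
              (Nat.choose (2 * d) d : ℚ) := by
  obtain ⟨n, rfl⟩ := Nat.exists_eq_add_of_le hkd
  rw [Nat.add_sub_cancel_left]
  exact one_div_succ_add_sum_lhsSummand k n (by omega)
end

section
/- Let X, Y be i.i.d. uniform[0,1] random variables with an independent i.i.d. copy X', Y' from the same distribution, in a sample of size d ≥ 2 of i.i.d. uniforms. The bivariate Kendall's tau of the two smallest order statistics (X_{1:d}, X_{2:d}) equals (d-1)/(2d-1); i.e., κ[ρ_{{1,2}}(Π_T)] = (d-1)/(2d-1). -/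
/-!
For `0 ≤ a ≤ b ≤ 1` the complement of `{X₁:d ≤ a, X₂:d ≤ b}` is the disjoint union of
`{every coordinate > a}` and `{exactly one coordinate ≤ a, all others > b}`, so the joint
distribution function of the two smallest order statistics is
`H(a, b) = 1 - (1 - a)^d - d a (1 - b)^(d-1)`.
The quantity to compute is `4 E[H(X₁:d, X₂:d)] - 1`, which reduces to the two moments
`E[(1 - X₁:d)^d] = 1/2` and `E[X₁:d (1 - X₂:d)^(d-1)] = 1/(4(2d - 1))`.
Both follow from the layer-cake formula, because the tails it requires, such as
`P(X₁:d > s, X₂:d ≤ 1 - t) = H(1 - t, 1 - t) - H(s, 1 - t)`, are again values of `H`;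
the result is a polynomial integral.
-/

open MeasureTheory

/-- The uniform distribution on `[0,1]`. -/
noncomputable def unif : Measure ℝ := volume.restrict (Set.Icc 0 1)

/-- The joint distribution of `d` i.i.d. uniform `[0,1]` random variables. -/
noncomputable def unifPi (d : ℕ) : Measure (Fin d → ℝ) :=
  Measure.pi fun _ => unif

open Set
open scoped ENNReal

section ProductMeasure

variable {ι α : Type*} [Fintype ι] [MeasurableSpace α] (ν : Measure α) [SigmaFinite ν]

theorem MeasureTheory.Measure.pi_setOf_forall_mem (T : Set α) :
    Measure.pi (fun _ : ι => ν) {x | ∀ i, x i ∈ T} = ν T ^ Fintype.card ι := by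
  have hpi : {x : ι → α | ∀ i, x i ∈ T} = univ.pi fun _ => T := by ext; simp
  rw [hpi, Measure.pi_pi, Finset.prod_const, Finset.card_univ]

theorem MeasureTheory.Measure.pi_setOf_exists_mem_forall_ne_mem [DecidableEq ι] {S T : Set α}
    (hS : MeasurableSet S) (hT : MeasurableSet T) (hST : Disjoint S T) :
    Measure.pi (fun _ : ι => ν) {x | ∃ i, x i ∈ S ∧ ∀ j ≠ i, x j ∈ T}
      = Fintype.card ι * ν S * ν T ^ (Fintype.card ι - 1) := by
  set B : ι → Set (ι → α) := fun i => univ.pi (Function.update (fun _ => T) i S)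
  have hB : {x : ι → α | ∃ i, x i ∈ S ∧ ∀ j ≠ i, x j ∈ T} = ⋃ i, B i := by
    ext x
    simp only [B, mem_ofPred_eq, mem_iUnion, mem_univ_pi]
    refine exists_congr fun i => ⟨fun ⟨hi, hj⟩ j => ?_,
      fun h => ⟨by simpa using h i, fun j hj => by simpa [hj] using h j⟩⟩
    rcases eq_or_ne j i with rfl | hji
    · simpa using hi
    · simpa [hji] using hj j hji
  have hdisj : Pairwise (Function.onFun Disjoint B) := by
    refine fun i j hij => disjoint_left.2 fun x hxi hxj => hST.notMem_of_mem_left (a := x i) ?_ ?_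
    · simpa [B] using hxi i (mem_univ i)
    · simpa [B, hij] using hxj i (mem_univ i)
  have hBmeas : ∀ i, Measure.pi (fun _ : ι => ν) (B i) = ν S * ν T ^ (Fintype.card ι - 1) := by
    intro i
    rw [Measure.pi_pi]
    simp_rw [Function.apply_update (fun _ => ν)]
    rw [Finset.prod_update_of_mem (Finset.mem_univ i), Finset.prod_const,
      Finset.card_sdiff_of_subset (by simp), Finset.card_univ, Finset.card_singleton]
  rw [hB, measure_iUnion hdisj fun i => .univ_pi fun j => ?_, tsum_fintype]
  · simp [hBmeas, mul_assoc]
  · rcases eq_or_ne j i with rfl | hji <;> simp [*]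

end ProductMeasure

instance : IsProbabilityMeasure unif := ⟨by simp [unif]⟩

instance (d : ℕ) : IsProbabilityMeasure (unifPi d) := by
  unfold unifPi; infer_instance

theorem unif_Ioi {a : ℝ} (ha₀ : 0 ≤ a) : unif (Ioi a) = ENNReal.ofReal (1 - a) := by
  have hset : Ioi a ∩ Icc 0 1 = Ioc a 1 := by
    ext; simp only [mem_inter_iff, mem_Ioi, mem_Icc, mem_Ioc]; grind
  rw [unif, Measure.restrict_apply measurableSet_Ioi, hset, Real.volume_Ioc]

theorem unif_Iic {a : ℝ} (ha₁ : a ≤ 1) : unif (Iic a) = ENNReal.ofReal a := by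
  have hset : Iic a ∩ Icc 0 1 = Icc 0 a := by
    ext; simp only [mem_inter_iff, mem_Iic, mem_Icc]; grind
  rw [unif, Measure.restrict_apply measurableSet_Iic, hset, Real.volume_Icc, sub_zero]

theorem ae_unifPi_mem_Icc (d : ℕ) : ∀ᵐ x ∂unifPi d, ∀ i, x i ∈ Icc (0 : ℝ) 1 :=
  ae_all_iff.2 fun _ => Measure.tendsto_eval_ae_ae.eventually (ae_restrict_mem measurableSet_Icc)

open Finset in
theorem sortVec_le_iff_lt_card {d : ℕ} (x : Fin d → ℝ) (j : Fin d) (t : ℝ) :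
    sortVec x j ≤ t ↔ (j : ℕ) < #{i | x i ≤ t} := by
  rw [sortVec, ← Tuple.lt_card_le_iff_apply_le_of_monotone (Tuple.monotone_sort x)]
  congr! 1
  exact card_equiv (Tuple.sort x) (by simp)

theorem measurable_sortVec_s18 {d : ℕ} (j : Fin d) : Measurable fun x : Fin d → ℝ => sortVec x j := by
  refine measurable_of_Iic fun t => ?_
  have hcard : Measurable fun x : Fin d → ℝ => (Finset.univ.filter fun i => x i ≤ t).card := by
    simp_rw [Finset.card_filter]
    exact Finset.measurable_sum _ fun i _ =>
      Measurable.ite (measurableSet_le (measurable_pi_apply i) measurable_const)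
        measurable_const measurable_const
  simp_rw [preimage, mem_Iic, sortVec_le_iff_lt_card]
  exact measurableSet_lt measurable_const hcard

theorem sortVec_zero_le_sortVec_one {d : ℕ} (hd : 1 < d) (x : Fin d → ℝ) :
    sortVec x ⟨0, by omega⟩ ≤ sortVec x ⟨1, hd⟩ :=
  Tuple.monotone_sort x (Fin.mk_le_mk.2 zero_le_one)

theorem sortVec_mem {d : ℕ} {x : Fin d → ℝ} {S : Set ℝ} (hx : ∀ i, x i ∈ S) (j : Fin d) :
    sortVec x j ∈ S :=
  hx _

theorem lt_sortVec_zero_iff {d : ℕ} (hd : 0 < d) (x : Fin d → ℝ) (a : ℝ) :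
    a < sortVec x ⟨0, hd⟩ ↔ ∀ i, a < x i := by
  simp [← not_le, sortVec_le_iff_lt_card]

theorem sortVec_zero_le_and_lt_sortVec_one_iff {d : ℕ} (hd : 1 < d) (x : Fin d → ℝ) {a b : ℝ}
    (hab : a ≤ b) :
    sortVec x ⟨0, by omega⟩ ≤ a ∧ b < sortVec x ⟨1, hd⟩ ↔ ∃ i, x i ≤ a ∧ ∀ j ≠ i, b < x j := by
  simp only [← not_le (b := b), sortVec_le_iff_lt_card, Finset.card_pos,
    Finset.filter_nonempty_iff, not_lt, Finset.card_le_one, Finset.mem_filter_univ,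
    Finset.mem_univ, true_and]
  constructor
  · rintro ⟨⟨i, hi⟩, hunique⟩
    exact ⟨i, hi, fun j hji hj => hji (hunique j hj i (hi.trans hab))⟩
  · rintro ⟨i, hi, hothers⟩
    refine ⟨⟨i, hi⟩, fun j hj k hk => ?_⟩
    by_contra hjk
    rcases eq_or_ne j i with rfl | hji
    · exact hothers k (Ne.symm hjk) hk
    · exact hothers j hji hj

section JointDistribution

variable {d : ℕ}

theorem unifPi_lt_sortVec_zero (hd : 0 < d) {a : ℝ} (ha : 0 ≤ a) :
    unifPi d {y | a < sortVec y ⟨0, hd⟩} = ENNReal.ofReal (1 - a) ^ d := by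
  simp_rw [lt_sortVec_zero_iff, ← unif_Ioi ha, unifPi]
  simpa using Measure.pi_setOf_forall_mem (ι := Fin d) unif (Ioi a)

theorem unifPi_sortVec_zero_le_and_lt_sortVec_one (hd : 1 < d) {a b : ℝ} (ha : 0 ≤ a)
    (hab : a ≤ b) (hb : b ≤ 1) :
    unifPi d {y | sortVec y ⟨0, by omega⟩ ≤ a ∧ b < sortVec y ⟨1, hd⟩}
      = d * ENNReal.ofReal a * ENNReal.ofReal (1 - b) ^ (d - 1) := by
  simp_rw [sortVec_zero_le_and_lt_sortVec_one_iff hd _ hab, ← unif_Iic (hab.trans hb),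
    ← unif_Ioi (ha.trans hab), unifPi]
  simpa using Measure.pi_setOf_exists_mem_forall_ne_mem (ι := Fin d) unif measurableSet_Iic
    measurableSet_Ioi (Iic_disjoint_Ioi hab)

theorem unifPi_real_sortVec_zero_le (hd : 0 < d) {a : ℝ} (ha₀ : 0 ≤ a) (ha₁ : a ≤ 1) :
    (unifPi d).real {y | sortVec y ⟨0, hd⟩ ≤ a} = 1 - (1 - a) ^ d := by
  have hcompl : {y : Fin d → ℝ | sortVec y ⟨0, hd⟩ ≤ a} = {y | a < sortVec y ⟨0, hd⟩}ᶜ := by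
    ext; simp
  rw [hcompl, measureReal_compl (measurableSet_lt measurable_const (measurable_sortVec_s18 _)),
    measureReal_def, measureReal_def, unifPi_lt_sortVec_zero hd ha₀, measure_univ,
    ENNReal.toReal_pow, ENNReal.toReal_ofReal (by linarith), ENNReal.toReal_one]

theorem unifPi_real_sortVec_zero_le_and_sortVec_one_le (hd : 1 < d) {a b : ℝ} (ha : 0 ≤ a)
    (hab : a ≤ b) (hb : b ≤ 1) :
    (unifPi d).real {y | sortVec y ⟨0, by omega⟩ ≤ a ∧ sortVec y ⟨1, hd⟩ ≤ b}
      = 1 - (1 - a) ^ d - d * a * (1 - b) ^ (d - 1) := by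
  set B := {y : Fin d → ℝ | a < sortVec y ⟨0, by omega⟩}
  set C := {y : Fin d → ℝ | sortVec y ⟨0, by omega⟩ ≤ a ∧ b < sortVec y ⟨1, hd⟩}
  have hcompl : {y : Fin d → ℝ | sortVec y ⟨0, by omega⟩ ≤ a ∧ sortVec y ⟨1, hd⟩ ≤ b}
      = (B ∪ C)ᶜ := by
    ext; simp only [B, C, mem_ofPred_eq, mem_compl_iff, mem_union]; grind
  have hB : MeasurableSet B := measurableSet_lt measurable_const (measurable_sortVec_s18 _)
  have hC : MeasurableSet C := (measurableSet_le (measurable_sortVec_s18 _) measurable_const).inter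
    (measurableSet_lt measurable_const (measurable_sortVec_s18 _))
  have hdisj : Disjoint B C := disjoint_left.2 fun _ h₁ h₂ => (not_lt.2 h₂.1) h₁
  rw [hcompl, measureReal_compl (hB.union hC), measureReal_union hdisj hC, measureReal_def,
    measureReal_def, measureReal_def, unifPi_lt_sortVec_zero _ ha,
    unifPi_sortVec_zero_le_and_lt_sortVec_one hd ha hab hb, measure_univ]
  simp only [ENNReal.toReal_one, ENNReal.toReal_mul, ENNReal.toReal_pow, ENNReal.toReal_natCast,
    ENNReal.toReal_ofReal ha, ENNReal.toReal_ofReal (sub_nonneg.2 hb),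
    ENNReal.toReal_ofReal (sub_nonneg.2 (hab.trans hb))]
  ring

theorem unifPi_real_lt_sortVec_zero_and_sortVec_one_le (hd : 1 < d) {s u : ℝ} (hs : 0 ≤ s)
    (hsu : s ≤ u) (hu : u ≤ 1) :
    (unifPi d).real {y | s < sortVec y ⟨0, by omega⟩ ∧ sortVec y ⟨1, hd⟩ ≤ u}
      = (1 - s) ^ d - (1 - u) ^ d - d * (u - s) * (1 - u) ^ (d - 1) := by
  have hle := sortVec_zero_le_sortVec_one hd
  have hsdiff : {y | s < sortVec y ⟨0, by omega⟩ ∧ sortVec y ⟨1, hd⟩ ≤ u}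
      = {y | sortVec y ⟨0, by omega⟩ ≤ u ∧ sortVec y ⟨1, hd⟩ ≤ u}
        \ {y | sortVec y ⟨0, by omega⟩ ≤ s ∧ sortVec y ⟨1, hd⟩ ≤ u} := by
    ext y
    have := hle y
    simp only [mem_ofPred_eq, mem_sdiff]
    constructor
    · rintro ⟨h₁, h₂⟩; exact ⟨⟨by linarith, h₂⟩, fun h => by linarith [h.1]⟩
    · rintro ⟨⟨_, h₂⟩, h₃⟩; exact ⟨lt_of_not_ge fun h => h₃ ⟨h, h₂⟩, h₂⟩
  have hsub : {y : Fin d → ℝ | sortVec y ⟨0, by omega⟩ ≤ s ∧ sortVec y ⟨1, hd⟩ ≤ u}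
      ⊆ {y | sortVec y ⟨0, by omega⟩ ≤ u ∧ sortVec y ⟨1, hd⟩ ≤ u} :=
    fun y hy => ⟨hy.1.trans hsu, hy.2⟩
  rw [hsdiff, measureReal_sdiff hsub
      ((measurableSet_le (measurable_sortVec_s18 _) measurable_const).inter
        (measurableSet_le (measurable_sortVec_s18 _) measurable_const)),
    unifPi_real_sortVec_zero_le_and_sortVec_one_le hd (hs.trans hsu) le_rfl hu,
    unifPi_real_sortVec_zero_le_and_sortVec_one_le hd hs hsu hu]
  ring

end JointDistribution

section LayerCake

variable {α : Type*} [MeasurableSpace α]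

theorem lintegral_ofReal_pow_succ_eq (μ : Measure α) {f : α → ℝ} (hf : 0 ≤ᵐ[μ] f)
    (hfm : AEMeasurable f μ) (n : ℕ) :
    ∫⁻ ω, ENNReal.ofReal (f ω ^ (n + 1)) ∂μ
      = ∫⁻ t in Ioi 0, μ {ω | t ≤ f ω} * ENNReal.ofReal ((n + 1) * t ^ n) := by
  have hpos : ∀ᵐ t ∂volume.restrict (Ioi (0 : ℝ)), 0 ≤ ((n : ℝ) + 1) * t ^ n :=
    (ae_restrict_mem measurableSet_Ioi).mono fun t (ht : 0 < t) => by positivity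
  rw [← lintegral_comp_eq_lintegral_meas_le_mul μ hf hfm
    (fun _ _ =>
      (by fun_prop : Continuous fun t : ℝ => ((n : ℝ) + 1) * t ^ n).intervalIntegrable _ _)
    hpos]
  congr with ω
  rw [intervalIntegral.integral_const_mul, integral_pow, zero_pow n.succ_ne_zero, sub_zero]
  field_simp

theorem setLIntegral_Ioi_zero_eq_ofReal_integral {G : ℝ → ℝ≥0∞} {g : ℝ → ℝ} {c : ℝ} (hc : 0 ≤ c)
    (hg : Continuous g) (hg₀ : ∀ t ∈ Ioc 0 c, 0 ≤ g t)
    (hG : ∀ t ∈ Ioc 0 c, G t = ENNReal.ofReal (g t)) (hG₀ : ∀ t, c < t → G t = 0) :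
    ∫⁻ t in Ioi 0, G t = ENNReal.ofReal (∫ t in 0..c, g t) := by
  rw [← Ioc_union_Ioi_eq_Ioi hc, lintegral_union measurableSet_Ioi Ioc_disjoint_Ioi_same,
    setLIntegral_congr_fun measurableSet_Ioi fun t ht => hG₀ t ht, lintegral_zero, add_zero,
    setLIntegral_congr_fun measurableSet_Ioc hG, intervalIntegral.integral_of_le hc,
    ofReal_integral_eq_lintegral_ofReal hg.integrableOn_Ioc
      ((ae_restrict_mem measurableSet_Ioc).mono hg₀)]

theorem lintegral_ofReal_pow_succ_eq_of_tail {μ : Measure α} [IsFiniteMeasure μ] {f : α → ℝ}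
    (hf : 0 ≤ᵐ[μ] f) (hfm : AEMeasurable f μ) (n : ℕ) {c : ℝ} (hc : 0 ≤ c) {F : ℝ → ℝ}
    (hF : Continuous F) (htail : ∀ t ∈ Ioc 0 c, μ.real {ω | t ≤ f ω} = F t)
    (hzero : ∀ t, c < t → μ {ω | t ≤ f ω} = 0) :
    ∫⁻ ω, ENNReal.ofReal (f ω ^ (n + 1)) ∂μ
      = ENNReal.ofReal (∫ t in 0..c, (n + 1) * t ^ n * F t) := by
  rw [lintegral_ofReal_pow_succ_eq μ hf hfm n]
  refine setLIntegral_Ioi_zero_eq_ofReal_integral hc (by fun_prop) (fun t ht => ?_)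
    (fun t ht => ?_) fun t ht => by simp [hzero t ht]
  · have := ht.1
    rw [← htail t ht]
    positivity
  · have := ht.1
    rw [← htail t ht, measureReal_def, eq_comm, mul_comm, ENNReal.ofReal_mul ENNReal.toReal_nonneg,
      ENNReal.ofReal_toReal (measure_ne_top _ _)]

theorem lintegral_ofReal_mul_eq_lintegral_setLIntegral {μ : Measure α} {f g : α → ℝ}
    (hf : 0 ≤ᵐ[μ] f) (hfm : Measurable f) (hgm : Measurable g) :
    ∫⁻ x, ENNReal.ofReal (f x * g x) ∂μ
      = ∫⁻ s in Ioi 0, ∫⁻ x in {x | s < f x}, ENNReal.ofReal (g x) ∂μ := by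
  set W := fun x => ENNReal.ofReal (g x)
  calc ∫⁻ x, ENNReal.ofReal (f x * g x) ∂μ = ∫⁻ x, ENNReal.ofReal (f x) ∂μ.withDensity W := by
        rw [lintegral_withDensity_eq_lintegral_mul₀ hgm.ennreal_ofReal.aemeasurable
          hfm.ennreal_ofReal.aemeasurable]
        exact lintegral_congr_ae <| hf.mono fun x (hx : 0 ≤ f x) => by
          simp only [Pi.mul_apply, ENNReal.ofReal_mul hx, mul_comm]
    _ = ∫⁻ s in Ioi 0, μ.withDensity W {x | s < f x} :=
        lintegral_eq_lintegral_meas_lt _ ((withDensity_absolutelyContinuous μ W).ae_le hf)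
          hfm.aemeasurable
    _ = ∫⁻ s in Ioi 0, ∫⁻ x in {x | s < f x}, ENNReal.ofReal (g x) ∂μ :=
        lintegral_congr fun s => withDensity_apply _ (measurableSet_lt measurable_const hfm)

end LayerCake

theorem integral_one_sub_sortVec_zero_pow {d : ℕ} (hd : 0 < d) :
    ∫ x, (1 - sortVec x ⟨0, hd⟩) ^ d ∂unifPi d = 1 / 2 := by
  obtain ⟨n, rfl⟩ : ∃ n, d = n + 1 := ⟨d - 1, by omega⟩
  have hcube := ae_unifPi_mem_Icc (n + 1)
  have hf : 0 ≤ᵐ[unifPi (n + 1)] fun x => 1 - sortVec x ⟨0, hd⟩ :=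
    hcube.mono fun x hx => sub_nonneg.2 (sortVec_mem hx _).2
  have hfm : Measurable fun x : Fin (n + 1) → ℝ => 1 - sortVec x ⟨0, hd⟩ :=
    measurable_const.sub (measurable_sortVec_s18 _)
  have htail : ∀ t ∈ Ioc (0 : ℝ) 1,
      (unifPi (n + 1)).real {x | t ≤ 1 - sortVec x ⟨0, hd⟩} = 1 - t ^ (n + 1) := by
    intro t ht
    have hset : {x : Fin (n + 1) → ℝ | t ≤ 1 - sortVec x ⟨0, hd⟩}
        = {x | sortVec x ⟨0, hd⟩ ≤ 1 - t} := by
      ext; simp only [mem_ofPred_eq]; constructor <;> intro h <;> linarith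
    rw [hset, unifPi_real_sortVec_zero_le hd (by linarith [ht.2]) (by linarith [ht.1]),
      sub_sub_cancel]
  have hzero : ∀ t, 1 < t → unifPi (n + 1) {x | t ≤ 1 - sortVec x ⟨0, hd⟩} = 0 := fun t ht =>
    measure_eq_zero_iff_ae_notMem.2 <| hcube.mono fun x hx (hxt : t ≤ _) => by
      linarith [(sortVec_mem hx ⟨0, hd⟩).1]
  have hval : ∫ t in (0 : ℝ)..1, (n + 1) * t ^ n * (1 - t ^ (n + 1)) = 1 / 2 := by
    have e : ∀ t : ℝ,
        (n + 1) * t ^ n * (1 - t ^ (n + 1)) = (n + 1) * t ^ n - (n + 1) * t ^ (2 * n + 1) := by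
      intro t; ring
    simp only [e]
    rw [intervalIntegral.integral_sub (by apply Continuous.intervalIntegrable; fun_prop)
      (by apply Continuous.intervalIntegrable; fun_prop)]
    simp only [intervalIntegral.integral_const_mul, integral_pow]
    push_cast
    field_simp
    ring
  rw [integral_eq_lintegral_of_nonneg_ae (hf.mono fun x hx => pow_nonneg hx _)
      (hfm.pow_const _).aestronglyMeasurable,
    lintegral_ofReal_pow_succ_eq_of_tail hf hfm.aemeasurable n zero_le_one (by fun_prop) htail
      hzero,
    hval, ENNReal.toReal_ofReal (by norm_num)]

theorem setLIntegral_lt_sortVec_zero_one_sub_sortVec_one_pow (n : ℕ) {s : ℝ} (hs₀ : 0 ≤ s)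
    (hs₁ : s ≤ 1) :
    ∫⁻ x in {x | s < sortVec x ⟨0, by omega⟩},
        ENNReal.ofReal ((1 - sortVec x ⟨1, by omega⟩) ^ (n + 1)) ∂unifPi (n + 2)
      = ENNReal.ofReal ((n + 2) / (2 * (2 * n + 3)) * (1 - s) ^ (2 * n + 3)) := by
  set μ := unifPi (n + 2)
  set S := {x : Fin (n + 2) → ℝ | s < sortVec x ⟨0, by omega⟩}
  have hle := sortVec_zero_le_sortVec_one (d := n + 2) (by omega)
  have hf : 0 ≤ᵐ[μ.restrict S] fun x => 1 - sortVec x ⟨1, by omega⟩ :=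
    ae_restrict_of_ae <| (ae_unifPi_mem_Icc _).mono fun x hx => sub_nonneg.2 (sortVec_mem hx _).2
  have hfm : Measurable fun x : Fin (n + 2) → ℝ => 1 - sortVec x ⟨1, by omega⟩ :=
    measurable_const.sub (measurable_sortVec_s18 _)
  have htail : ∀ t ∈ Ioc 0 (1 - s), (μ.restrict S).real {x | t ≤ 1 - sortVec x ⟨1, by omega⟩}
      = (1 - s) ^ (n + 2) - t ^ (n + 2) - (n + 2) * (1 - s - t) * t ^ (n + 1) := by
    intro t ht
    have hset : {x | t ≤ 1 - sortVec x ⟨1, by omega⟩} ∩ S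
        = {x | s < sortVec x ⟨0, by omega⟩ ∧ sortVec x ⟨1, by omega⟩ ≤ 1 - t} := by
      ext; simp only [S, mem_inter_iff, mem_ofPred_eq]; constructor <;> intro h <;> constructor <;>
        linarith [h.1, h.2]
    rw [measureReal_restrict_apply (measurableSet_le measurable_const hfm), hset,
      unifPi_real_lt_sortVec_zero_and_sortVec_one_le _ hs₀ (by linarith [ht.2])
        (by linarith [ht.1])]
    push_cast
    ring
  have hzero : ∀ t, 1 - s < t → μ.restrict S {x | t ≤ 1 - sortVec x ⟨1, by omega⟩} = 0 := by
    intro t ht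
    rw [Measure.restrict_apply (measurableSet_le measurable_const hfm)]
    convert measure_empty (μ := μ)
    refine eq_empty_iff_forall_notMem.2 fun x ⟨(h₁ : t ≤ _), (h₂ : s < _)⟩ => ?_
    linarith [hle x]
  have hval : ∫ t in (0 : ℝ)..(1 - s), (n + 1) * t ^ n
        * ((1 - s) ^ (n + 2) - t ^ (n + 2) - (n + 2) * (1 - s - t) * t ^ (n + 1))
      = (n + 2) / (2 * (2 * n + 3)) * (1 - s) ^ (2 * n + 3) := by
    have e : ∀ t : ℝ, (n + 1) * t ^ n
          * ((1 - s) ^ (n + 2) - t ^ (n + 2) - (n + 2) * (1 - s - t) * t ^ (n + 1))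
        = ((n + 1) * (1 - s) ^ (n + 2)) * t ^ n + ((n + 1) * (n + 1)) * t ^ (2 * n + 2)
          - ((n + 1) * (n + 2) * (1 - s)) * t ^ (2 * n + 1) := by
      intro t; ring
    simp only [e]
    rw [intervalIntegral.integral_sub (by apply Continuous.intervalIntegrable; fun_prop)
        (by apply Continuous.intervalIntegrable; fun_prop),
      intervalIntegral.integral_add (by apply Continuous.intervalIntegrable; fun_prop)
        (by apply Continuous.intervalIntegrable; fun_prop)]
    simp only [intervalIntegral.integral_const_mul, integral_pow]
    push_cast
    field_simp
    ring
  rw [lintegral_ofReal_pow_succ_eq_of_tail hf hfm.aemeasurable n (sub_nonneg.2 hs₁) (by fun_prop)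
    htail hzero, hval]

theorem integral_sortVec_zero_mul_one_sub_sortVec_one_pow {d : ℕ} (hd : 1 < d) :
    ∫ x, sortVec x ⟨0, by omega⟩ * (1 - sortVec x ⟨1, hd⟩) ^ (d - 1) ∂unifPi d
      = 1 / (4 * (2 * d - 1)) := by
  obtain ⟨n, rfl⟩ : ∃ n, d = n + 2 := ⟨d - 2, by omega⟩
  have hcube := ae_unifPi_mem_Icc (n + 2)
  have hm₀ := measurable_sortVec_s18 (d := n + 2) ⟨0, by omega⟩
  have hm₁ := measurable_sortVec_s18 (d := n + 2) ⟨1, hd⟩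
  have hval : ∫ s in (0 : ℝ)..1, (n + 2) / (2 * (2 * n + 3)) * (1 - s) ^ (2 * n + 3)
      = 1 / (4 * (2 * n + 3)) := by
    rw [intervalIntegral.integral_const_mul, intervalIntegral.integral_comp_sub_left
      (fun s => s ^ (2 * n + 3)), integral_pow]
    push_cast
    field_simp
    ring
  rw [show n + 2 - 1 = n + 1 from rfl, integral_eq_lintegral_of_nonneg_ae
      (hcube.mono fun x hx => ?_) (by fun_prop),
    lintegral_ofReal_mul_eq_lintegral_setLIntegral (hcube.mono fun x hx => (sortVec_mem hx _).1)
      hm₀ (by fun_prop),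
    setLIntegral_Ioi_zero_eq_ofReal_integral zero_le_one
      (g := fun s => (n + 2) / (2 * (2 * n + 3)) * (1 - s) ^ (2 * n + 3)) (by fun_prop)
      (fun s hs => ?_) (fun s hs => ?_) (fun s hs => ?_), hval,
    ENNReal.toReal_ofReal (by positivity)]
  · push_cast; ring
  · have : 0 ≤ 1 - s := by linarith [hs.2]
    positivity
  · exact setLIntegral_lt_sortVec_zero_one_sub_sortVec_one_pow n hs.1.le hs.2
  · rw [Measure.restrict_eq_zero.2, lintegral_zero_measure]
    exact measure_eq_zero_iff_ae_notMem.2 <| hcube.mono fun x hx (hsx : s < _) => by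
      linarith [(sortVec_mem hx ⟨0, by omega⟩).2]
  · exact mul_nonneg (sortVec_mem hx _).1 (pow_nonneg (sub_nonneg.2 (sortVec_mem hx _).2) _)

theorem stmt18 (d : ℕ) (hd : 2 ≤ d) :
    4 * (∫ x, ((unifPi d) {y | sortVec y ⟨0, by omega⟩ ≤ sortVec x ⟨0, by omega⟩ ∧
                  sortVec y ⟨1, by omega⟩ ≤ sortVec x ⟨1, by omega⟩}).toReal
          ∂(unifPi d)) - 1
      = ((d : ℝ) - 1) / (2 * d - 1) := by
  have hcdf : ∀ᵐ x ∂unifPi d,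
      ((unifPi d) {y | sortVec y ⟨0, by omega⟩ ≤ sortVec x ⟨0, by omega⟩ ∧
          sortVec y ⟨1, hd⟩ ≤ sortVec x ⟨1, hd⟩}).toReal
        = (1 - (1 - sortVec x ⟨0, by omega⟩) ^ d)
          - d * (sortVec x ⟨0, by omega⟩ * (1 - sortVec x ⟨1, hd⟩) ^ (d - 1)) := by
    filter_upwards [ae_unifPi_mem_Icc d] with x hx
    rw [← measureReal_def, unifPi_real_sortVec_zero_le_and_sortVec_one_le hd (sortVec_mem hx _).1
      (sortVec_zero_le_sortVec_one hd x) (sortVec_mem hx _).2]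
    ring
  have hmin := integral_one_sub_sortVec_zero_pow (d := d) (by omega)
  have hmix := integral_sortVec_zero_mul_one_sub_sortVec_one_pow hd
  have hden : (2 * d - 1 : ℝ) ≠ 0 := by
    have : (2 : ℝ) ≤ d := by exact_mod_cast hd
    linarith
  -- Integrability is read off from the moments: a non-integrable function has integral `0`.
  have hint_min : Integrable (fun x => (1 - sortVec x ⟨0, by omega⟩) ^ d) (unifPi d) :=
    .of_integral_ne_zero (by rw [hmin]; norm_num)
  have hint_mix : Integrable
      (fun x => sortVec x ⟨0, by omega⟩ * (1 - sortVec x ⟨1, hd⟩) ^ (d - 1)) (unifPi d) :=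
    .of_integral_ne_zero (by rw [hmix]; positivity)
  have hint_one_sub : Integrable (fun x => 1 - (1 - sortVec x ⟨0, by omega⟩) ^ d) (unifPi d) :=
    (integrable_const 1).sub hint_min
  rw [integral_congr_ae hcdf, integral_sub hint_one_sub (hint_mix.const_mul _),
    integral_sub (integrable_const 1) hint_min, integral_const_mul, hmin, hmix, integral_const,
    probReal_univ, one_smul]
  field_simp
  ring
end
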